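/- Let G be a finite non-abelian nilpotent group such that |G| has at least three distinct prime divisors. Then the proper power graph P**(G) is not a line graph: there is no graph Γ such that P**(G) is isomorphic to the line graph of Γ. -/

import Mathlib

/-- The power graph of a group `G`: distinct `x, y` are adjacent iff one is a positive
integer power of the other. -/
def powerGraph (G : Type) [Group G] : SimpleGraph G where
  Adj x y := x ≠ y ∧ ((∃ n : ℕ, 0 < n ∧ y ^ n = x) ∨ (∃ n : ℕ, 0 < n ∧ x ^ n = y))
  symm := by
    constructor
    rintro x y ⟨hxy, h⟩
    exact ⟨hxy.symm, h.symm⟩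
  loopless := by
    constructor
    rintro x ⟨h, -⟩
    exact h rfl

/-- A vertex is dominating if it is adjacent to every other vertex. -/
def SimpleGraph.IsDominatingVertex {V : Type} (H : SimpleGraph V) (v : V) : Prop :=
  ∀ u, u ≠ v → H.Adj v u

/-- The proper power graph: the induced subgraph of the power graph on the
set of non-dominating vertices. -/
def properPowerGraph (G : Type) [Group G] :=
  (powerGraph G).induce {x : G | ¬ (powerGraph G).IsDominatingVertex x}

/-- A graph is a line graph if it is isomorphic to the line graph of some graph. -/
def IsLineGraph {V : Type} (H : SimpleGraph V) : Prop :=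
  ∃ (W : Type) (Γ : SimpleGraph W), Nonempty (H ≃g Γ.lineGraph)

/-! A finite nilpotent group is the direct product of its Sylow subgroups, so two non-commuting
elements `a`, `b` can be found in one Sylow `p`-subgroup, which is centralized by any element `u`
of prime order `q ≠ p`. For a `p`-element `c`, coprimality makes `u` a power of `c * u` and makes
`d ∈ zpowers (c * u)` force `d ∈ zpowers c` for `p`-elements `d`. Hence `u` is adjacent to
`a * u`, `b * u`, `a * b * u`, which are pairwise non-adjacent because `a`, `b`, `a * b` pairwise
do not commute, and none of these four vertices is dominating. A line graph contains no such
induced claw `K_{1,3}`: of three edges meeting an edge `s(v, w)`, two share `v` or two share `w`. -/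

open Subgroup

section Coprime

variable {G : Type*} [Group G] {c d u : G}

theorem commute_of_mem_zpowers (h : d ∈ zpowers c) : Commute c d := by
  obtain ⟨k, rfl⟩ := mem_zpowers_iff.mp h
  exact (Commute.refl c).zpow_right k

theorem eq_one_of_mem_zpowers_of_coprime (h : d ∈ zpowers c)
    (hco : (orderOf d).Coprime (orderOf c)) : d = 1 :=
  orderOf_eq_one_iff.mp (hco.eq_one_of_dvd (orderOf_dvd_of_mem_zpowers h))

theorem mem_zpowers_mul_of_coprime (hcu : Commute c u) (hco : (orderOf c).Coprime (orderOf u)) :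
    u ∈ zpowers (c * u) := by
  have hpow : (c * u) ^ orderOf c = u ^ orderOf c := by
    rw [hcu.mul_pow, pow_orderOf_eq_one, one_mul]
  exact zpowers_le.mpr (hpow ▸ pow_mem (mem_zpowers _) _) (mem_zpowers_pow_iff.mpr hco)

theorem mem_zpowers_of_mem_zpowers_mul (hcu : Commute c u) (hdu : (orderOf d).Coprime (orderOf u))
    (h : d ∈ zpowers (c * u)) : d ∈ zpowers c := by
  obtain ⟨k, rfl⟩ := mem_zpowers_iff.mp h
  have hpow : ((c * u) ^ k) ^ orderOf u ∈ zpowers c := by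
    rw [← zpow_natCast, ← zpow_mul, mul_comm, zpow_mul, zpow_natCast, hcu.mul_pow,
      pow_orderOf_eq_one, mul_one]
    exact zpow_mem (pow_mem (mem_zpowers c) _) _
  exact zpowers_le.mpr hpow (mem_zpowers_pow_iff.mpr hdu.symm)

theorem mem_zpowers_of_mul_mem_zpowers_mul (hdu : Commute d u)
    (hc : (orderOf c).Coprime (orderOf u)) (hd : (orderOf d).Coprime (orderOf u))
    (h : c * u ∈ zpowers (d * u)) : c ∈ zpowers d := by
  refine mem_zpowers_of_mem_zpowers_mul hdu hc ?_
  simpa using mul_mem h (inv_mem (mem_zpowers_mul_of_coprime hdu hd))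

end Coprime

section PowerGraph

variable {G : Type} [Group G] [Finite G] {c d u x y : G}

theorem exists_pos_pow_eq_iff_mem_zpowers : (∃ n, 0 < n ∧ y ^ n = x) ↔ x ∈ zpowers y := by
  constructor
  · rintro ⟨n, -, rfl⟩
    exact pow_mem (mem_zpowers y) n
  · intro h
    obtain ⟨n, rfl⟩ := mem_powers_iff_mem_zpowers.mpr h
    exact ⟨n + orderOf y, by have := orderOf_pos y; omega, by
      rw [pow_add, pow_orderOf_eq_one, mul_one]⟩

theorem powerGraph_adj_iff :
    (powerGraph G).Adj x y ↔ x ≠ y ∧ (x ∈ zpowers y ∨ y ∈ zpowers x) := by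
  simp only [powerGraph, exists_pos_pow_eq_iff_mem_zpowers]

theorem not_isDominatingVertex_powerGraph_of_coprime (hx : x ≠ 1) (hy : y ≠ 1)
    (hco : (orderOf x).Coprime (orderOf y)) : ¬ (powerGraph G).IsDominatingVertex x := by
  have hne : y ≠ x := fun h => hx (orderOf_eq_one_iff.mp (hco.eq_one_of_dvd (h ▸ dvd_rfl)))
  intro hdom
  obtain ⟨-, h | h⟩ := powerGraph_adj_iff.mp (hdom y hne)
  · exact hx (eq_one_of_mem_zpowers_of_coprime h hco)
  · exact hy (eq_one_of_mem_zpowers_of_coprime h hco.symm)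

theorem not_isDominatingVertex_powerGraph_mul (hu : u ≠ 1) (hcd : ¬ Commute c d)
    (hcu : Commute c u) (hc : (orderOf c).Coprime (orderOf u))
    (hd : (orderOf d).Coprime (orderOf u)) :
    ¬ (powerGraph G).IsDominatingVertex (c * u) := by
  have hne : d ≠ c * u := by
    rintro rfl
    exact hcd ((Commute.refl c).mul_right hcu)
  intro hdom
  obtain ⟨-, h | h⟩ := powerGraph_adj_iff.mp (hdom d hne)
  · have hud : u ∈ zpowers d := zpowers_le.mpr h (mem_zpowers_mul_of_coprime hcu hc)
    exact hu (eq_one_of_mem_zpowers_of_coprime hud hd.symm)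
  · exact hcd (commute_of_mem_zpowers (mem_zpowers_of_mem_zpowers_mul hcu hd h))

theorem powerGraph_adj_mul (hc : c ≠ 1) (hcu : Commute c u)
    (hco : (orderOf c).Coprime (orderOf u)) : (powerGraph G).Adj u (c * u) :=
  powerGraph_adj_iff.mpr ⟨(mul_ne_right.mpr hc).symm, Or.inl (mem_zpowers_mul_of_coprime hcu hco)⟩

theorem powerGraph_not_adj_mul_mul (hcd : ¬ Commute c d) (hcu : Commute c u)
    (hdu : Commute d u) (hc : (orderOf c).Coprime (orderOf u))
    (hd : (orderOf d).Coprime (orderOf u)) : ¬ (powerGraph G).Adj (c * u) (d * u) := by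
  rw [powerGraph_adj_iff]
  rintro ⟨-, h | h⟩
  · exact hcd (commute_of_mem_zpowers (mem_zpowers_of_mul_mem_zpowers_mul hdu hc hd h)).symm
  · exact hcd (commute_of_mem_zpowers (mem_zpowers_of_mul_mem_zpowers_mul hcu hd hc h))

end PowerGraph

theorem SimpleGraph.lineGraph_adj_or_adj_or_adj {W : Type*} {Γ : SimpleGraph W}
    {e e₁ e₂ e₃ : Γ.edgeSet} (h₁ : Γ.lineGraph.Adj e e₁) (h₂ : Γ.lineGraph.Adj e e₂)
    (h₃ : Γ.lineGraph.Adj e e₃) (n₁₂ : e₁ ≠ e₂) (n₁₃ : e₁ ≠ e₃) (n₂₃ : e₂ ≠ e₃) :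
    Γ.lineGraph.Adj e₁ e₂ ∨ Γ.lineGraph.Adj e₁ e₃ ∨ Γ.lineGraph.Adj e₂ e₃ := by
  obtain ⟨v, w, hvw⟩ : ∃ v w, (e : Sym2 W) = s(v, w) := ⟨_, _, (Quot.out_eq _).symm⟩
  obtain ⟨-, w₁, hw₁, hw₁'⟩ := lineGraph_adj_iff_exists.mp h₁
  obtain ⟨-, w₂, hw₂, hw₂'⟩ := lineGraph_adj_iff_exists.mp h₂
  obtain ⟨-, w₃, hw₃, hw₃'⟩ := lineGraph_adj_iff_exists.mp h₃
  rw [hvw, Sym2.mem_iff] at hw₁ hw₂ hw₃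
  have : w₁ = w₂ ∨ w₁ = w₃ ∨ w₂ = w₃ := by grind
  rcases this with rfl | rfl | rfl
  · exact .inl (lineGraph_adj_iff_exists.mpr ⟨n₁₂, w₁, hw₁', hw₂'⟩)
  · exact .inr (.inl (lineGraph_adj_iff_exists.mpr ⟨n₁₃, w₁, hw₁', hw₃'⟩))
  · exact .inr (.inr (lineGraph_adj_iff_exists.mpr ⟨n₂₃, w₂, hw₂', hw₃'⟩))

theorem not_isLineGraph_of_claw {V : Type} {H : SimpleGraph V} {x y₁ y₂ y₃ : V}
    (h₁ : H.Adj x y₁) (h₂ : H.Adj x y₂) (h₃ : H.Adj x y₃)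
    (h₁₂ : ¬ H.Adj y₁ y₂) (h₁₃ : ¬ H.Adj y₁ y₃) (h₂₃ : ¬ H.Adj y₂ y₃)
    (n₁₂ : y₁ ≠ y₂) (n₁₃ : y₁ ≠ y₃) (n₂₃ : y₂ ≠ y₃) : ¬ IsLineGraph H := by
  rintro ⟨W, Γ, ⟨f⟩⟩
  rcases SimpleGraph.lineGraph_adj_or_adj_or_adj (f.map_adj_iff.mpr h₁) (f.map_adj_iff.mpr h₂)
    (f.map_adj_iff.mpr h₃) (f.injective.ne n₁₂) (f.injective.ne n₁₃) (f.injective.ne n₂₃)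
    with h | h | h
  · exact h₁₂ (f.map_adj_iff.mp h)
  · exact h₁₃ (f.map_adj_iff.mp h)
  · exact h₂₃ (f.map_adj_iff.mp h)

theorem properPowerGraph_not_isLineGraph_of_coprime {G : Type} [Group G] [Finite G] {a b u : G}
    (hab : ¬ Commute a b) (hu : u ≠ 1) (hau : Commute a u) (hbu : Commute b u)
    (ha : (orderOf a).Coprime (orderOf u)) (hb : (orderOf b).Coprime (orderOf u))
    (habu : (orderOf (a * b)).Coprime (orderOf u)) : ¬ IsLineGraph (properPowerGraph G) := by
  have hab_u : Commute (a * b) u := hau.mul_left hbu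
  have hba : ¬ Commute b a := fun h => hab h.symm
  have ha_ab : ¬ Commute a (a * b) := fun h =>
    hab (by simpa using (Commute.refl a).inv_right.mul_right h)
  have hb_ab : ¬ Commute b (a * b) := fun h =>
    hab (by simpa using (h.mul_right (Commute.refl b).inv_right).symm)
  have ne_one {c d : G} (h : ¬ Commute c d) : c ≠ 1 := fun h1 => h (h1 ▸ Commute.one_left d)
  have mul_ne_mul {c d : G} (h : ¬ Commute c d) : c * u ≠ d * u :=
    (mul_left_injective u).ne fun e => h (e ▸ Commute.refl c)
  refine not_isLineGraph_of_claw
    (x := ⟨u, not_isDominatingVertex_powerGraph_of_coprime hu (ne_one hab) ha.symm⟩)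
    (y₁ := ⟨a * u, not_isDominatingVertex_powerGraph_mul hu hab hau ha hb⟩)
    (y₂ := ⟨b * u, not_isDominatingVertex_powerGraph_mul hu hba hbu hb ha⟩)
    (y₃ := ⟨a * b * u,
      not_isDominatingVertex_powerGraph_mul hu (fun h => ha_ab h.symm) hab_u habu ha⟩)
    ?_ ?_ ?_ ?_ ?_ ?_ ?_ ?_ ?_
  · exact powerGraph_adj_mul (ne_one hab) hau ha
  · exact powerGraph_adj_mul (ne_one hba) hbu hb
  · exact powerGraph_adj_mul (ne_one fun h => ha_ab h.symm) hab_u habu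
  · exact powerGraph_not_adj_mul_mul hab hau hbu ha hb
  · exact powerGraph_not_adj_mul_mul ha_ab hau hab_u ha habu
  · exact powerGraph_not_adj_mul_mul hb_ab hbu hab_u hb habu
  · exact Subtype.coe_ne_coe.mp (mul_ne_mul hab)
  · exact Subtype.coe_ne_coe.mp (mul_ne_mul ha_ab)
  · exact Subtype.coe_ne_coe.mp (mul_ne_mul hb_ab)

section Nilpotent

variable {G : Type*} [Group G] [Finite G] [Group.IsNilpotent G]

theorem Group.exists_mem_sylow_not_commute {a b : G} (hab : ¬ Commute a b) :
    ∃ (p : ℕ) (_ : Fact p.Prime) (P : Sylow p G) (x y : G), x ∈ P ∧ y ∈ P ∧ ¬ Commute x y := by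
  obtain ⟨ϕ⟩ := (Group.isNilpotent_of_finite_tfae.out 0 4).mp ‹Group.IsNilpotent G›
  by_contra! h
  have hcomm : Commute (ϕ.symm a) (ϕ.symm b) := by
    funext p P
    exact Subtype.ext
      (h p ⟨Nat.prime_of_mem_primeFactors p.2⟩ P _ _ (ϕ.symm a p P).2 (ϕ.symm b p P).2)
  exact hab (by simpa using hcomm.map ϕ)

theorem commute_of_mem_sylow_of_orderOf_eq {p q : ℕ} [Fact p.Prime] [Fact q.Prime] (hpq : p ≠ q)
    (P : Sylow p G) {c u : G} (hc : c ∈ P) (hu : orderOf u = q) : Commute c u := by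
  obtain ⟨Q, hQ⟩ := (IsPGroup.of_card (G := zpowers u) (n := 1)
    (by rw [Nat.card_zpowers, hu, pow_one])).exists_le_sylow
  exact commute_of_normal_of_disjoint _ _ inferInstance inferInstance
    (IsPGroup.disjoint_of_ne p q hpq _ _ P.isPGroup' Q.isPGroup') c u hc (hQ (mem_zpowers u))

end Nilpotent

theorem properPowerGraph_not_isLineGraph_of_three_primes (G : Type) [Group G] [Finite G]
    (hnil : Group.IsNilpotent G) (hna : ∃ a b : G, a * b ≠ b * a)
    (hp : 3 ≤ (Nat.card G).primeFactors.card) :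
    ¬ IsLineGraph (properPowerGraph G) := by
  obtain ⟨a, b, hab⟩ := hna
  obtain ⟨p, _, P, x, y, hx, hy, hxy⟩ := Group.exists_mem_sylow_not_commute hab
  obtain ⟨q, hq, hqp⟩ := (Nat.card G).primeFactors.exists_mem_ne (by omega) p
  have hq' : q.Prime := Nat.prime_of_mem_primeFactors hq
  have : Fact q.Prime := ⟨hq'⟩
  obtain ⟨u, hu⟩ := exists_prime_orderOf_dvd_card' q (Nat.dvd_of_mem_primeFactors hq)
  have hu1 : u ≠ 1 := fun h => hq'.ne_one (by rw [← hu, h, orderOf_one])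
  have hcomm {c : G} (hc : c ∈ P) : Commute c u :=
    commute_of_mem_sylow_of_orderOf_eq hqp.symm P hc hu
  have hcop {c : G} (hc : c ∈ P) : (orderOf c).Coprime (orderOf u) := by
    rw [← orderOf_mk c hc, hu]
    exact P.isPGroup'.orderOf_coprime ((Nat.coprime_primes Fact.out hq').mpr hqp.symm) _
  exact properPowerGraph_not_isLineGraph_of_coprime hxy hu1 (hcomm hx) (hcomm hy) (hcop hx)
    (hcop hy) (hcop (mul_mem hx hy))
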